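/- Fix n ≥ 2 and work in the scenario [(2 n),(2 2 … 2)]. Consider the following n(n+2) deterministic behaviors, specified by (α_1, α_2, β_1,…,β_n): (1) α_1 = 1, α_2 = k, β_l = 1 for all l, for k = 1,…,n; (2) α_1 = 1, α_2 = k, β_l = 2 and β_j = 1 for all j ≠ l, for all k, l ∈ {1,…,n} with k ≠ l; (3) α_1 = 2, α_2 = k, β_l = 2 for all l, for k = 1,…,n; (4) α_1 = 2, α_2 = k, β_k = 1 and β_l = 2 for all l ≠ k, for k = 1,…,n. Then each of these behaviors P satisfies I_n(P) = 0, and, regarded as points of the real vector space indexed by the coordinates P(ab|xy), these n(n+2) points are affinely independent. -/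
import Mathlib


/-!
Bell scenario [(2 n),(2 2 … 2)]: party A has two measurements, measurement `1` with
outcomes `{1,2}` and measurement `2` with outcomes `{1,…,n}`; party B has `n`
measurements, each with outcomes `{1,2}`.  A behavior is given by a pair of families
`P1 : Fin n → Fin 2 → Fin 2 → ℝ` and `P2 : Fin n → Fin n → Fin 2 → ℝ`, where
`P1 y a b = P(ab|1y)` and `P2 y a b = P(ab|2y)`.  The paper's label `k ∈ {1,…,n}`
(for measurements of B and for outcomes of A's second measurement) corresponds to the
index `k-1`, and the labels `1`,`2` correspond to the indices `0`,`1`.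
-/

/-- The behavior `(P1, P2)` is a convex combination of deterministic behaviors
`P(ab|xy) = δ_{a,α_x} δ_{b,β_y}` with `α_1 : Fin 2`, `α_2 : Fin n`, `β : Fin n → Fin 2`. -/
def IsLocal2n {n : ℕ} (P1 : Fin n → Fin 2 → Fin 2 → ℝ)
    (P2 : Fin n → Fin n → Fin 2 → ℝ) : Prop :=
  ∃ q : Fin 2 → Fin n → (Fin n → Fin 2) → ℝ,
    (∀ α₁ α₂ β, 0 ≤ q α₁ α₂ β) ∧
    (∑ α₁, ∑ α₂, ∑ β, q α₁ α₂ β) = 1 ∧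
    (∀ (y : Fin n) (a b : Fin 2),
      P1 y a b = ∑ α₁, ∑ α₂, ∑ β,
        q α₁ α₂ β * (if α₁ = a then 1 else 0) * (if β y = b then 1 else 0)) ∧
    (∀ (y : Fin n) (a : Fin n) (b : Fin 2),
      P2 y a b = ∑ α₁, ∑ α₂, ∑ β,
        q α₁ α₂ β * (if α₂ = a then 1 else 0) * (if β y = b then 1 else 0))

/-- The Bell expression
`I_n(P) = P_A(1|1) + Σ_{k=1}^{n−1} P_B(1|k) − Σ_{k=1}^{n} P(11|1k) − Σ_{k=1}^{n−1} P(k1|2k)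
          + Σ_{k=1}^{n−1} P(k1|2n)`,
where the marginals are computed as `P_A(1|1) = Σ_b P(1b|1 1)` and
`P_B(1|k) = Σ_a P(a1|1k)` (well-defined choices for local behaviors). -/
noncomputable def BellIn (n : ℕ) (hn : 2 ≤ n) (P1 : Fin n → Fin 2 → Fin 2 → ℝ)
    (P2 : Fin n → Fin n → Fin 2 → ℝ) : ℝ :=
  (∑ b, P1 ⟨0, by omega⟩ 0 b)
  + (∑ k : Fin (n - 1), ∑ a, P1 (Fin.castLE (Nat.sub_le n 1) k) a 0)
  - (∑ y : Fin n, P1 y 0 0)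
  - (∑ k : Fin (n - 1),
      P2 (Fin.castLE (Nat.sub_le n 1) k) (Fin.castLE (Nat.sub_le n 1) k) 0)
  + (∑ k : Fin (n - 1), P2 ⟨n - 1, by omega⟩ (Fin.castLE (Nat.sub_le n 1) k) 0)

/-- The deterministic behavior with assignments `α₁ : Fin 2`, `α₂ : Fin n` for A's two
measurements and `β : Fin n → Fin 2` for B's measurements, regarded as a point of the
real vector space indexed by the coordinates `P(ab|xy)`. -/
noncomputable def detPt {n : ℕ} (α₁ : Fin 2) (α₂ : Fin n) (β : Fin n → Fin 2) :
    (Fin n → Fin 2 → Fin 2 → ℝ) × (Fin n → Fin n → Fin 2 → ℝ) :=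
  (fun y a b => if a = α₁ ∧ b = β y then 1 else 0,
   fun y a b => if a = α₂ ∧ b = β y then 1 else 0)

open Finset in
lemma sum_pair_left {c : Prop} [Decidable c] (v : Fin 2) :
    ∑ b : Fin 2, (if c ∧ b = v then (1:ℝ) else 0) = if c then 1 else 0 := by
  by_cases h : c <;> simp [h, Finset.sum_ite_eq']
lemma sum_pair_right {c : Prop} [Decidable c] (v : Fin 2) :
    ∑ a : Fin 2, (if a = v ∧ c then (1:ℝ) else 0) = if c then 1 else 0 := by
  by_cases h : c <;> simp [h, Finset.sum_ite_eq']
lemma sum_castLE_ite {n : ℕ} (k : Fin n) (c : ℝ) :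
    ∑ j : Fin (n-1), (if k = Fin.castLE (Nat.sub_le n 1) j then c else 0)
      = if (k:ℕ) < n - 1 then c else 0 := by
  by_cases h : (k:ℕ) < n - 1
  · rw [if_pos h]
    rw [Finset.sum_eq_single_of_mem ⟨(k:ℕ), h⟩ (Finset.mem_univ _)]
    · rw [if_pos]; ext; rfl
    · intro j _ hj
      rw [if_neg]
      intro e
      exact hj (Fin.ext (congrArg Fin.val e).symm)
  · rw [if_neg h]
    apply Finset.sum_eq_zero
    intro j _
    rw [if_neg]
    intro e
    have := congrArg Fin.val e
    simp at this
    omega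
lemma bellIn_det {n : ℕ} (hn : 2 ≤ n) (α₁ : Fin 2) (α₂ : Fin n) (β : Fin n → Fin 2) :
    BellIn n hn (detPt α₁ α₂ β).1 (detPt α₁ α₂ β).2 =
      (if (0:Fin 2) = α₁ then 1 else 0)
      + (∑ j : Fin (n-1), if (0:Fin 2) = β (Fin.castLE (Nat.sub_le n 1) j) then (1:ℝ) else 0)
      - (∑ y : Fin n, if (0:Fin 2) = α₁ ∧ (0:Fin 2) = β y then (1:ℝ) else 0)
      - (∑ j : Fin (n-1), if Fin.castLE (Nat.sub_le n 1) j = α₂ ∧ (0:Fin 2) = β (Fin.castLE (Nat.sub_le n 1) j) then (1:ℝ) else 0)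
      + (∑ j : Fin (n-1), if Fin.castLE (Nat.sub_le n 1) j = α₂ ∧ (0:Fin 2) = β ⟨n-1, by omega⟩ then (1:ℝ) else 0) := by
  simp only [BellIn, detPt, sum_pair_left, sum_pair_right]

lemma bell_fam1 {n : ℕ} (hn : 2 ≤ n) (k : Fin n) :
    BellIn n hn (detPt 0 k fun _ => 0).1 (detPt 0 k fun _ => 0).2 = 0 := by
  rw [bellIn_det]
  simp [Finset.card_univ]
  rw [Nat.cast_sub (by omega)]
  ring

lemma bell_fam3 {n : ℕ} (hn : 2 ≤ n) (k : Fin n) :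
    BellIn n hn (detPt 1 k fun _ => 1).1 (detPt 1 k fun _ => 1).2 = 0 := by
  rw [bellIn_det]
  simp

lemma bell_fam4 {n : ℕ} (hn : 2 ≤ n) (k : Fin n) :
    BellIn n hn (detPt 1 k fun j => if j = k then 0 else 1).1
      (detPt 1 k fun j => if j = k then 0 else 1).2 = 0 := by
  rw [bellIn_det]
  have e1 : (∑ j : Fin (n-1), if Fin.castLE (Nat.sub_le n 1) j = k ∧
        (0:Fin 2) = (if Fin.castLE (Nat.sub_le n 1) j = k then 0 else 1) then (1:ℝ) else 0)
      = ∑ j : Fin (n-1), if (0:Fin 2) = (if Fin.castLE (Nat.sub_le n 1) j = k then 0 else 1) then (1:ℝ) else 0 :=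
    Finset.sum_congr rfl fun j _ => by
      by_cases h : Fin.castLE (Nat.sub_le n 1) j = k <;> simp [h]
  have e2 : (∑ j : Fin (n-1), if Fin.castLE (Nat.sub_le n 1) j = k ∧
        (0:Fin 2) = (if (⟨n-1, by omega⟩ : Fin n) = k then 0 else 1) then (1:ℝ) else 0) = 0 :=
    Finset.sum_eq_zero fun j _ => by
      rw [if_neg]
      rintro ⟨h1, h2⟩
      rw [if_neg (fun e : (⟨n-1, by omega⟩ : Fin n) = k => by
        have hv := congrArg Fin.val e
        have hv1 := congrArg Fin.val h1
        simp at hv hv1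
        omega)] at h2
      exact absurd h2 (by decide)
  rw [e1, e2]
  simp

lemma bell_fam2 {n : ℕ} (hn : 2 ≤ n) (k l : Fin n) (hkl : k ≠ l) :
    BellIn n hn (detPt 0 k fun j => if j = l then 1 else 0).1
      (detPt 0 k fun j => if j = l then 1 else 0).2 = 0 := by
  rw [bellIn_det]
  have e2 : (∑ j : Fin (n-1), if (0:Fin 2) = (if Fin.castLE (Nat.sub_le n 1) j = l then 1 else 0) then (1:ℝ) else 0)
      = ∑ j : Fin (n-1), ((1:ℝ) - if l = Fin.castLE (Nat.sub_le n 1) j then 1 else 0) :=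
    Finset.sum_congr rfl fun j _ => by
      by_cases h : Fin.castLE (Nat.sub_le n 1) j = l
      · rw [if_pos h, if_neg (by decide : ¬ (0:Fin 2) = 1), if_pos h.symm]; ring
      · rw [if_neg h, if_pos rfl, if_neg (fun e => h e.symm)]; ring
  have e3 : (∑ y : Fin n, if (0:Fin 2) = 0 ∧ (0:Fin 2) = (if y = l then 1 else 0) then (1:ℝ) else 0)
      = ∑ y : Fin n, ((1:ℝ) - if l = y then 1 else 0) :=
    Finset.sum_congr rfl fun y _ => by
      by_cases h : y = l
      · rw [if_pos h, if_neg (fun hc : _ ∧ _ => absurd hc.2 (by decide)), if_pos h.symm]; ring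
      · rw [if_neg h, if_pos ⟨rfl, rfl⟩, if_neg (fun e => h e.symm)]; ring
  have e4 : (∑ j : Fin (n-1), if Fin.castLE (Nat.sub_le n 1) j = k ∧
        (0:Fin 2) = (if Fin.castLE (Nat.sub_le n 1) j = l then 1 else 0) then (1:ℝ) else 0)
      = ∑ j : Fin (n-1), if k = Fin.castLE (Nat.sub_le n 1) j then (1:ℝ) else 0 :=
    Finset.sum_congr rfl fun j _ => by
      by_cases h : Fin.castLE (Nat.sub_le n 1) j = k
      · have hl : ¬ Fin.castLE (Nat.sub_le n 1) j = l := fun e => hkl (h ▸ e)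
        rw [if_neg hl, if_pos ⟨h, rfl⟩, if_pos h.symm]
      · rw [if_neg (fun hc => h hc.1), if_neg (fun e => h e.symm)]
  rw [e2, e3, e4]
  by_cases hl : (⟨n-1, by omega⟩ : Fin n) = l
  · have e5 : (∑ j : Fin (n-1), if Fin.castLE (Nat.sub_le n 1) j = k ∧
        (0:Fin 2) = (if (⟨n-1, by omega⟩ : Fin n) = l then 1 else 0) then (1:ℝ) else 0) = 0 :=
      Finset.sum_eq_zero fun j _ => by
        rw [if_neg]
        rintro ⟨h1, h2⟩
        rw [if_pos hl] at h2
        exact absurd h2 (by decide)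
    rw [e5]
    have hlv : (l : ℕ) = n - 1 := (congrArg Fin.val hl).symm
    have hkv : (k : ℕ) ≠ (l : ℕ) := fun e => hkl (Fin.ext e)
    have hk1 : (k : ℕ) < n - 1 := by have := k.isLt; omega
    simp only [Finset.sum_sub_distrib, Finset.sum_const, Finset.card_univ, Fintype.card_fin,
      nsmul_eq_mul, mul_one, Finset.sum_ite_eq, Finset.mem_univ, if_true,
      eq_self_iff_true, sum_castLE_ite]
    rw [if_neg (show ¬ (l:ℕ) < n - 1 by omega), if_pos hk1,
      Nat.cast_sub (show 1 ≤ n by omega)]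
    push_cast
    ring
  · have e5 : (∑ j : Fin (n-1), if Fin.castLE (Nat.sub_le n 1) j = k ∧
        (0:Fin 2) = (if (⟨n-1, by omega⟩ : Fin n) = l then 1 else 0) then (1:ℝ) else 0)
        = ∑ j : Fin (n-1), if k = Fin.castLE (Nat.sub_le n 1) j then (1:ℝ) else 0 :=
      Finset.sum_congr rfl fun j _ => by
        by_cases h : Fin.castLE (Nat.sub_le n 1) j = k
        · rw [if_neg hl, if_pos ⟨h, rfl⟩, if_pos h.symm]
        · rw [if_neg (fun hc => h hc.1), if_neg (fun e => h e.symm)]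
    rw [e5]
    have hlv : (l : ℕ) < n - 1 := by
      have h1 := l.isLt
      have : (l:ℕ) ≠ n - 1 := fun e => hl (Fin.ext (by simp [e]))
      omega
    simp only [Finset.sum_sub_distrib, Finset.sum_const, Finset.card_univ, Fintype.card_fin,
      nsmul_eq_mul, mul_one, Finset.sum_ite_eq, Finset.mem_univ, if_true,
      eq_self_iff_true, sum_castLE_ite]
    rw [if_pos hlv, Nat.cast_sub (show 1 ≤ n by omega)]
    push_cast
    ring

lemma sum_subtype_ne {n : ℕ} (f : Fin n × Fin n → ℝ)
    (hf : ∀ x : Fin n × Fin n, x.1 = x.2 → f x = 0) :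
    ∑ p : {p : Fin n × Fin n // p.1 ≠ p.2}, f p.val = ∑ x : Fin n × Fin n, f x := by
  rw [← Finset.sum_subtype (Finset.filter (fun x : Fin n × Fin n => x.1 ≠ x.2) Finset.univ)
      (by simp) f]
  apply Finset.sum_subset (Finset.filter_subset _ _)
  intro x _ hx
  apply hf
  by_contra h
  exact hx (Finset.mem_filter.2 ⟨Finset.mem_univ _, h⟩)

@[simp] lemma fin2_zero_eq_ite01 (c : Prop) [Decidable c] :
    ((0:Fin 2) = if c then 0 else 1) ↔ c := by split <;> simp_all <;> decide
@[simp] lemma fin2_zero_eq_ite10 (c : Prop) [Decidable c] :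
    ((0:Fin 2) = if c then 1 else 0) ↔ ¬ c := by split <;> simp_all <;> decide
@[simp] lemma fin2_one_eq_ite01 (c : Prop) [Decidable c] :
    ((1:Fin 2) = if c then 0 else 1) ↔ ¬ c := by split <;> simp_all <;> decide
@[simp] lemma fin2_one_eq_ite10 (c : Prop) [Decidable c] :
    ((1:Fin 2) = if c then 1 else 0) ↔ c := by split <;> simp_all <;> decide

/-- part (ii) of the proof of Theorem 4: the `n(n+2)` deterministic
behaviors
(1) `α₁ = 1, α₂ = k, β_l = 1` for all `l`  (`k = 1,…,n`);
(2) `α₁ = 1, α₂ = k, β_l = 2, β_j = 1` for `j ≠ l`  (`k ≠ l`);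
(3) `α₁ = 2, α₂ = k, β_l = 2` for all `l`  (`k = 1,…,n`);
(4) `α₁ = 2, α₂ = k, β_k = 1, β_l = 2` for `l ≠ k`  (`k = 1,…,n`)
all saturate the inequality `I_n ≥ 0`, and they are affinely independent.
(The index type `Fin n ⊕ {(k,l) : k ≠ l} ⊕ Fin n ⊕ Fin n` has exactly `n(n+2)`
elements.) -/
theorem In_saturating_points
    (n : ℕ) (hn : 2 ≤ n)
    (pts : (Fin n ⊕ ({p : Fin n × Fin n // p.1 ≠ p.2} ⊕ (Fin n ⊕ Fin n))) →
      (Fin n → Fin 2 → Fin 2 → ℝ) × (Fin n → Fin n → Fin 2 → ℝ))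
    (hpts : pts = Sum.elim
      (fun k => detPt 0 k (fun _ => 0))
      (Sum.elim
        (fun p => detPt 0 p.1.1 (fun j => if j = p.1.2 then 1 else 0))
        (Sum.elim
          (fun k => detPt 1 k (fun _ => 1))
          (fun k => detPt 1 k (fun j => if j = k then 0 else 1))))) :
    (∀ i, BellIn n hn (pts i).1 (pts i).2 = 0) ∧ AffineIndependent ℝ pts := by
  constructor
  · intro i
    subst hpts
    rcases i with k | (p | (k | k))
    · exact bell_fam1 hn k
    · exact bell_fam2 hn p.val.1 p.val.2 p.prop
    · exact bell_fam3 hn k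
    · exact bell_fam4 hn k
  · rw [affineIndependent_iff_of_fintype]
    intro w hw hvs
    rw [Finset.weightedVSub_eq_linear_combination _ hw] at hvs
    have key1 : ∀ (y : Fin n) (a b : Fin 2), (∑ i, w i * (pts i).1 y a b) = 0 := by
      intro y a b
      have h := congrFun (congrFun (congrFun (congrArg Prod.fst hvs) y) a) b
      simpa [Prod.fst_sum, Finset.sum_apply] using h
    have key2 : ∀ (y : Fin n) (a : Fin n) (b : Fin 2), (∑ i, w i * (pts i).2 y a b) = 0 := by
      intro y a b
      have h := congrFun (congrFun (congrFun (congrArg Prod.snd hvs) y) a) b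
      simpa [Prod.snd_sum, Finset.sum_apply] using h
    have hD : ∀ k : Fin n, w (.inr (.inr (.inr k))) = 0 := by
      intro k
      have h := key1 k 1 0
      simp only [Fintype.sum_sum_type, hpts, Sum.elim_inl, Sum.elim_inr, detPt] at h
      simp [mul_ite, Finset.sum_ite_eq] at h
      exact h
    have hCsum : (∑ k : Fin n, w (.inr (.inr (.inl k)))) = 0 := by
      have h := key1 ⟨0, by omega⟩ 1 1
      simp only [Fintype.sum_sum_type, hpts, Sum.elim_inl, Sum.elim_inr, detPt] at h
      simp [mul_ite, hD] at h
      exact h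
    have hBC : ∀ p : {p : Fin n × Fin n // p.1 ≠ p.2},
        w (.inr (.inl p)) + w (.inr (.inr (.inl p.val.1))) = 0 := by
      intro p
      have h := key2 p.val.2 p.val.1 1
      simp only [Fintype.sum_sum_type, hpts, Sum.elim_inl, Sum.elim_inr, detPt] at h
      simp [mul_ite, hD, Finset.sum_ite_eq] at h
      rw [Finset.sum_eq_single_of_mem p (Finset.mem_univ p)
        (fun q _ hq => if_neg fun hc => hq (Subtype.ext (Prod.ext hc.1.symm hc.2.symm))),
        if_pos ⟨rfl, rfl⟩] at h
      exact h
    have hC : ∀ a : Fin n, w (.inr (.inr (.inl a))) = 0 := by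
      intro a
      have h := key1 a 0 1
      simp only [Fintype.sum_sum_type, hpts, Sum.elim_inl, Sum.elim_inr, detPt] at h
      simp [mul_ite, hD, Finset.sum_ite_eq] at h
      have e1 : (∑ x : {p : Fin n × Fin n // p.1 ≠ p.2},
            if a = (x : Fin n × Fin n).2 then w (Sum.inr (Sum.inl x)) else 0)
          = ∑ x : {p : Fin n × Fin n // p.1 ≠ p.2},
            (fun z : Fin n × Fin n =>
              if z.1 ≠ z.2 ∧ a = z.2 then -w (Sum.inr (Sum.inr (Sum.inl z.1))) else 0) x.val :=
        Finset.sum_congr rfl fun q _ => by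
          dsimp only
          by_cases h' : a = (q : Fin n × Fin n).2
          · rw [if_pos h', if_pos ⟨q.prop, h'⟩]
            linarith [hBC q]
          · rw [if_neg h', if_neg (fun hc => h' hc.2)]
      rw [e1, sum_subtype_ne
          (fun z : Fin n × Fin n =>
            if z.1 ≠ z.2 ∧ a = z.2 then -w (Sum.inr (Sum.inr (Sum.inl z.1))) else 0)
          (fun x hx => if_neg (fun hc => hc.1 hx)),
        Fintype.sum_prod_type] at h
      have e2 : ∀ x1 : Fin n, (∑ x2 : Fin n, if x1 ≠ x2 ∧ a = x2 then
            -w (Sum.inr (Sum.inr (Sum.inl x1))) else 0)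
          = if x1 = a then 0 else -w (Sum.inr (Sum.inr (Sum.inl x1))) := fun x1 => by
        rw [Finset.sum_eq_single_of_mem a (Finset.mem_univ a)
          (fun y _ hy => if_neg fun hc => hy hc.2.symm)]
        by_cases h' : x1 = a
        · rw [if_pos h', if_neg (fun hc => hc.1 h')]
        · rw [if_pos ⟨h', rfl⟩, if_neg h']
      rw [Finset.sum_congr rfl (fun x1 _ => e2 x1)] at h
      have e3 : ∀ x1 : Fin n, (if x1 = a then (0:ℝ) else -w (Sum.inr (Sum.inr (Sum.inl x1))))
          = -w (Sum.inr (Sum.inr (Sum.inl x1)))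
            + (if x1 = a then w (Sum.inr (Sum.inr (Sum.inl x1))) else 0) := fun x1 => by
        by_cases h' : x1 = a <;> simp [h']
      rw [Finset.sum_congr rfl (fun x1 _ => e3 x1), Finset.sum_add_distrib] at h
      simp [Finset.sum_ite_eq', hCsum] at h
      exact h
    have hB : ∀ p : {p : Fin n × Fin n // p.1 ≠ p.2}, w (.inr (.inl p)) = 0 := fun p => by
      have := hBC p
      have := hC p.val.1
      linarith
    have hA : ∀ k : Fin n, w (.inl k) = 0 := by
      intro a
      have h := key2 a a 0
      simp only [Fintype.sum_sum_type, hpts, Sum.elim_inl, Sum.elim_inr, detPt] at h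
      simp [mul_ite, hD, hB, hC, Finset.sum_ite_eq] at h
      exact h
    intro i
    rcases i with k | (p | (k | k))
    · exact hA k
    · exact hB p
    · exact hC k
    · exact hD k
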